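/- Let q > 2 be prime and let C' ⊆ (ℤ/qℤ)^m be a k-dimensional linear subspace that is single-error-correcting for the channel ℛ_q. Then (i) the concatenated code C = {z ∈ (ℤ/qℤ)^{2m} : (z_{2j} − z_{2j−1})_{j=1,…,m} ∈ C'} is a linear subspace of (ℤ/qℤ)^{2m} of dimension m+k which, identifying ℤ/qℤ with {0,…,q−1} ⊆ ℤ, is a 1-code of length 2m (Δ ≥ 2 between distinct codewords); and (ii) the code C̃ = {z ∈ (ℤ/qℤ)^{2m−1} : (z_1, (z_{2j+1} − z_{2j})_{j=1,…,m−1}) ∈ C'} is a linear subspace of dimension m+k−1 which is a 1-code of length 2m−1. -/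

import Mathlib

/-- `N(x,y) = Σᵢ max(yᵢ - xᵢ, 0)`, identifying `ℤ_q` with `{0,…,q-1} ⊆ ℤ` via `ZMod.val`. -/
def NasymZ {n q : ℕ} (x y : Fin n → ZMod q) : ℤ :=
  ∑ i, max (((y i).val : ℤ) - ((x i).val : ℤ)) 0

/-- The asymmetric distance `Δ(x,y) = max(N(x,y), N(y,x))`. -/
def DasymZ {n q : ℕ} (x y : Fin n → ZMod q) : ℤ :=
  max (NasymZ x y) (NasymZ y x)

/-- The `ℛ_q`-ball of `c ∈ ℤ_qᵐ`: words obtained from `c` by changing at most one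
coordinate by `±1 (mod q)`. -/
def RBall {q m : ℕ} (c : Fin m → ZMod q) : Set (Fin m → ZMod q) :=
  {d | d = c ∨ ∃ i, (d i = c i + 1 ∨ d i = c i - 1) ∧ ∀ j, j ≠ i → d j = c j}

/-- The word of pairwise differences `(z_{2j} - z_{2j-1})_{j=1,…,m}` of `z ∈ ℤ_q^{2m}`
(0-based: `z_{2j+1} - z_{2j}`). -/
def pairDiffZ (q m : ℕ) (z : Fin (2 * m) → ZMod q) : Fin m → ZMod q :=
  fun j => z ⟨2 * (j : ℕ) + 1, by have := j.isLt; omega⟩ -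
           z ⟨2 * (j : ℕ), by have := j.isLt; omega⟩

/-- The outer word `(z_1, (z_{2j+1} - z_{2j})_{j=1,…,m-1})` of `z ∈ ℤ_q^{2m-1}`. -/
def oddOuterZ (q m : ℕ) (z : Fin (2 * m - 1) → ZMod q) : Fin m → ZMod q :=
  fun j =>
    if h : (j : ℕ) = 0 then z ⟨0, by have := j.isLt; omega⟩
    else z ⟨2 * (j : ℕ), by have := j.isLt; omega⟩ -
         z ⟨2 * (j : ℕ) - 1, by have := j.isLt; omega⟩

/-!
If `Δ(x, y) ≤ 1`, then `y - x = u - v` in `ℤ_q`, where each of `u`, `v` is zero or a unit vector.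
Both concatenation maps `f` are linear and send `eᵢ` to `±e_{π i}`, with opposite signs on indices
of equal image; as `1 ≠ -1` for `q > 2`, they map `{0} ∪ {eᵢ}` injectively into the `ℛ_q`-ball
of `0`. For a linear code the `ℛ_q`-balls of `0` and of a codeword `c` meet only if `c = 0`. So for
codewords `x`, `y` with `Δ(x, y) ≤ 1`, the codeword `f u - f v = f y - f x` forces `f u = f v`,
hence `u = v` and `x = y`. The dimensions follow from rank–nullity, both maps being surjective.
-/

lemma eq_zero_or_eq_single_of_sum_le_one {ι : Type*} [Fintype ι] [DecidableEq ι] {g : ι → ℤ}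
    (hg : ∀ i, 0 ≤ g i) (hsum : ∑ i, g i ≤ 1) : g = 0 ∨ ∃ i, g = Pi.single i 1 := by
  by_cases hzero : ∀ i, g i = 0
  · exact Or.inl (funext hzero)
  obtain ⟨i, hi⟩ := not_forall.mp hzero
  refine Or.inr ⟨i, funext fun j => ?_⟩
  have hgi : g i ≤ 1 := (Finset.single_le_sum (fun j _ => hg j) (Finset.mem_univ i)).trans hsum
  by_cases hji : j = i
  · subst hji
    have := hg j
    simp only [Pi.single_eq_same]
    omega
  · have hpair : g i + g j ≤ 1 := by
      rw [← Finset.sum_pair (Ne.symm hji)]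
      exact (Finset.sum_le_sum_of_subset_of_nonneg (Finset.subset_univ _)
        fun k _ _ => hg k).trans hsum
    have := hg i
    have := hg j
    simp only [Pi.single_eq_of_ne hji]
    omega

lemma ite_one_neg_one_eq_or {R : Type*} [Ring R] (p : Prop) [Decidable p] :
    (if p then 1 else -1 : R) = 1 ∨ (if p then 1 else -1 : R) = -1 := by
  split_ifs <;> simp

lemma ite_one_neg_one_inj {R : Type*} [Ring R] (h : (-1 : R) ≠ 1) {p p' : Prop} [Decidable p]
    [Decidable p'] : (if p then 1 else -1 : R) = (if p' then 1 else -1) ↔ (p ↔ p') := by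
  split_ifs <;> simp_all [h.symm]

section

variable {q n m : ℕ}

def asymErrors (n q : ℕ) : Set (Fin n → ZMod q) := {u | u = 0 ∨ ∃ i, u = Pi.single i 1}

lemma intCast_mem_asymErrors {g : Fin n → ℤ} (hg : ∀ i, 0 ≤ g i) (hsum : ∑ i, g i ≤ 1) :
    (fun i => (g i : ZMod q)) ∈ asymErrors n q := by
  rcases eq_zero_or_eq_single_of_sum_le_one hg hsum with rfl | ⟨i, rfl⟩
  · exact Or.inl (by ext; simp)
  · exact Or.inr ⟨i, by ext j; by_cases hji : j = i <;> simp [hji]⟩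

lemma exists_sub_eq_sub_of_dasymZ_le_one [NeZero q] {x y : Fin n → ZMod q}
    (h : DasymZ x y ≤ 1) : ∃ u ∈ asymErrors n q, ∃ v ∈ asymErrors n q, y - x = u - v := by
  have hxy : NasymZ x y ≤ 1 := (le_max_left _ _).trans h
  have hyx : NasymZ y x ≤ 1 := (le_max_right _ _).trans h
  refine ⟨_, intCast_mem_asymErrors (fun i => le_max_right _ 0) hxy,
    _, intCast_mem_asymErrors (fun i => le_max_right _ 0) hyx, funext fun i => ?_⟩
  have hsplit : max ((y i).val - (x i).val : ℤ) 0 - max ((x i).val - (y i).val : ℤ) 0 =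
      (y i).val - (x i).val := by omega
  simp only [Pi.sub_apply]
  rw [← Int.cast_sub, hsplit]
  push_cast
  simp only [ZMod.natCast_zmod_val]

lemma add_mem_rBall {c v : Fin m → ZMod q} (hv : v ∈ RBall 0) : c + v ∈ RBall c := by
  rcases hv with rfl | ⟨i, hi, hrest⟩
  · exact Or.inl (add_zero c)
  · refine Or.inr ⟨i, ?_, fun j hj => by simp [hrest j hj]⟩
    rcases hi with hi | hi
    · exact Or.inl (by simp [hi])
    · exact Or.inr (by simp [hi, sub_eq_add_neg])

lemma single_mem_rBall_zero {t : Fin m} {s : ZMod q} (hs : s = 1 ∨ s = -1) :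
    Pi.single t s ∈ RBall 0 := by
  refine Or.inr ⟨t, ?_, fun j hj => by simp [hj]⟩
  rcases hs with rfl | rfl <;> simp

lemma eq_of_sub_mem_of_mem_rBall_zero (C' : Submodule (ZMod q) (Fin m → ZMod q))
    (hsec : ∀ c ∈ C', ∀ c' ∈ C', c ≠ c' → Disjoint (RBall c) (RBall c'))
    {u v : Fin m → ZMod q} (hu : u ∈ RBall 0) (hv : v ∈ RBall 0) (huv : u - v ∈ C') :
    u = v := by
  by_contra hne
  refine Set.disjoint_left.mp (hsec 0 C'.zero_mem _ huv ?_) hu ?_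
  · exact fun h => hne (sub_eq_zero.mp h.symm)
  · simpa using add_mem_rBall (c := u - v) hv

theorem two_le_dasymZ_of_injOn [NeZero q] (C' : Submodule (ZMod q) (Fin m → ZMod q))
    (hsec : ∀ c ∈ C', ∀ c' ∈ C', c ≠ c' → Disjoint (RBall c) (RBall c'))
    (f : (Fin n → ZMod q) →ₗ[ZMod q] (Fin m → ZMod q))
    (hmaps : Set.MapsTo f (asymErrors n q) (RBall 0)) (hinj : Set.InjOn f (asymErrors n q))
    {x y : Fin n → ZMod q} (hx : f x ∈ C') (hy : f y ∈ C') (hxy : x ≠ y) :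
    2 ≤ DasymZ x y := by
  by_contra! hlt
  obtain ⟨u, hu, v, hv, huv⟩ := exists_sub_eq_sub_of_dasymZ_le_one (x := x) (y := y) (by omega)
  have hfuv : f u - f v ∈ C' := by
    rw [← map_sub, ← huv, map_sub]
    exact C'.sub_mem hy hx
  have := hinj hu hv (eq_of_sub_mem_of_mem_rBall_zero C' hsec (hmaps hu) (hmaps hv) hfuv)
  exact hxy (sub_eq_zero.mp (by rw [huv, this, sub_self])).symm

section SignedCoordinates

variable (f : (Fin n → ZMod q) →ₗ[ZMod q] (Fin m → ZMod q)) {π : Fin n → Fin m}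
  {ε : Fin n → ZMod q} (hf : ∀ i, f (Pi.single i 1) = Pi.single (π i) (ε i))
  (hε : ∀ i, ε i = 1 ∨ ε i = -1)
include hf hε

lemma mapsTo_asymErrors_rBall_zero : Set.MapsTo f (asymErrors n q) (RBall 0) := by
  rintro _ (rfl | ⟨i, rfl⟩)
  · rw [map_zero]
    exact Or.inl rfl
  · rw [hf]
    exact single_mem_rBall_zero (hε i)

lemma injOn_asymErrors [Nontrivial (ZMod q)] (hinj : Function.Injective fun i => (π i, ε i)) :
    Set.InjOn f (asymErrors n q) := by
  have hε0 : ∀ i, ε i ≠ 0 := fun i => by rcases hε i with h | h <;> simp [h]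
  have hsingle : ∀ i j, f (Pi.single i 1) = f (Pi.single j 1) → i = j := by
    intro i j h
    rw [hf, hf] at h
    have hπ : π i = π j := by
      by_contra hne
      exact hε0 i (by simpa [Pi.single_eq_of_ne hne] using congrFun h (π i))
    rw [hπ, Pi.single_inj] at h
    exact hinj (Prod.ext hπ h)
  rintro _ (rfl | ⟨i, rfl⟩) _ (rfl | ⟨j, rfl⟩) h
  · rfl
  · rw [map_zero, hf] at h
    exact absurd (congrFun h (π j)).symm (by simpa using hε0 j)
  · rw [map_zero, hf] at h
    exact absurd (congrFun h (π i)) (by simpa using hε0 i)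
  · rw [hsingle i j h]

lemma surjective_of_apply_single (hπ : Function.Surjective π) : Function.Surjective f := by
  rw [← LinearMap.range_eq_top, eq_top_iff, ← (Pi.basisFun (ZMod q) (Fin m)).span_eq,
    Submodule.span_le]
  rintro _ ⟨t, rfl⟩
  obtain ⟨i, rfl⟩ := hπ t
  refine ⟨ε i • Pi.single i 1, ?_⟩
  rw [map_smul, hf, Pi.basisFun_apply, ← Pi.single_smul', smul_eq_mul]
  rcases hε i with h | h <;> simp [h]

theorem two_le_dasymZ_of_apply_single [NeZero q] [Nontrivial (ZMod q)]
    (C' : Submodule (ZMod q) (Fin m → ZMod q))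
    (hsec : ∀ c ∈ C', ∀ c' ∈ C', c ≠ c' → Disjoint (RBall c) (RBall c'))
    (hinj : Function.Injective fun i => (π i, ε i)) {x y : Fin n → ZMod q}
    (hx : f x ∈ C') (hy : f y ∈ C') (hxy : x ≠ y) : 2 ≤ DasymZ x y :=
  two_le_dasymZ_of_injOn C' hsec f (mapsTo_asymErrors_rBall_zero f hf hε)
    (injOn_asymErrors f hf hε hinj) hx hy hxy

end SignedCoordinates

def pairDiffL (q m : ℕ) : (Fin (2 * m) → ZMod q) →ₗ[ZMod q] (Fin m → ZMod q) where
  toFun := pairDiffZ q m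
  map_add' x y := funext fun j => by simp only [pairDiffZ, Pi.add_apply]; ring
  map_smul' c x := funext fun j => by
    simp only [pairDiffZ, Pi.smul_apply, smul_eq_mul, RingHom.id_apply]; ring

def oddOuterL (q m : ℕ) : (Fin (2 * m - 1) → ZMod q) →ₗ[ZMod q] (Fin m → ZMod q) where
  toFun := oddOuterZ q m
  map_add' x y := funext fun j => by simp only [oddOuterZ, Pi.add_apply]; split <;> ring
  map_smul' c x := funext fun j => by
    simp only [oddOuterZ, Pi.smul_apply, smul_eq_mul, RingHom.id_apply]; split <;> ring

lemma pairDiffL_single (i : Fin (2 * m)) :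
    pairDiffL q m (Pi.single i 1) =
      Pi.single ⟨i / 2, by omega⟩ (if (i : ℕ) % 2 = 1 then 1 else -1) := by
  ext j
  simp only [pairDiffL, LinearMap.coe_mk, AddHom.coe_mk, pairDiffZ, Pi.single_apply, Fin.ext_iff]
  split_ifs <;> first | omega | simp

lemma oddOuterL_single (i : Fin (2 * m - 1)) :
    oddOuterL q m (Pi.single i 1) =
      Pi.single ⟨(i + 1) / 2, by omega⟩ (if (i : ℕ) % 2 = 0 then 1 else -1) := by
  ext j
  simp only [oddOuterL, LinearMap.coe_mk, AddHom.coe_mk, oddOuterZ, Pi.single_apply, Fin.ext_iff]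
  split_ifs <;> first | omega | simp

lemma pairDiffL_surjective : Function.Surjective (pairDiffL q m) :=
  surjective_of_apply_single _ pairDiffL_single (fun _ => ite_one_neg_one_eq_or _)
    fun t => ⟨⟨2 * t, by omega⟩, by ext; simp⟩

lemma oddOuterL_surjective : Function.Surjective (oddOuterL q m) :=
  surjective_of_apply_single _ oddOuterL_single (fun _ => ite_one_neg_one_eq_or _)
    fun t => ⟨⟨2 * t, by omega⟩, by ext; simp; omega⟩

lemma pairDiffL_sign_injective [Fact (2 < q)] :
    Function.Injective fun i : Fin (2 * m) =>
      ((⟨i / 2, by omega⟩ : Fin m), (if (i : ℕ) % 2 = 1 then 1 else -1 : ZMod q)) := by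
  intro i j h
  obtain ⟨hπ, hsign⟩ := Prod.mk.inj h
  rw [ite_one_neg_one_inj ZMod.neg_one_ne_one] at hsign
  simp only [Fin.ext_iff] at hπ ⊢
  omega

lemma oddOuterL_sign_injective [Fact (2 < q)] :
    Function.Injective fun i : Fin (2 * m - 1) =>
      ((⟨(i + 1) / 2, by omega⟩ : Fin m), (if (i : ℕ) % 2 = 0 then 1 else -1 : ZMod q)) := by
  intro i j h
  obtain ⟨hπ, hsign⟩ := Prod.mk.inj h
  rw [ite_one_neg_one_inj ZMod.neg_one_ne_one] at hsign
  simp only [Fin.ext_iff] at hπ ⊢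
  omega

end

theorem finrank_comap_add_finrank_of_surjective {K V W : Type*} [Field K] [AddCommGroup V]
    [Module K V] [AddCommGroup W] [Module K W] [FiniteDimensional K V] [FiniteDimensional K W]
    {f : V →ₗ[K] W} (hf : Function.Surjective f) (p : Submodule K W) :
    Module.finrank K (p.comap f) + Module.finrank K W =
      Module.finrank K V + Module.finrank K p := by
  have hg : Function.Surjective (p.mkQ ∘ₗ f) := p.mkQ_surjective.comp hf
  have hrank := (p.mkQ ∘ₗ f).finrank_range_add_finrank_ker
  rw [LinearMap.range_eq_top.mpr hg, finrank_top, LinearMap.ker_comp,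
    Submodule.ker_mkQ] at hrank
  have := p.finrank_quotient_add_finrank
  omega

/-- Let `q > 2` be prime and `C' ⊆ ℤ_qᵐ` a `k`-dimensional linear subspace that is
single-error-correcting for `ℛ_q`. Then (i) `C = {z : pairDiffZ z ∈ C'}` is a linear
subspace of `ℤ_q^{2m}` of dimension `m+k` which is a `1`-code of length `2m`, and
(ii) `C̃ = {z : oddOuterZ z ∈ C'}` is a linear subspace of `ℤ_q^{2m-1}` of dimension
`m+k-1` which is a `1`-code of length `2m-1`. -/
theorem concat_linear_one_code (q m k : ℕ) (hq : 2 < q) (hp : Nat.Prime q)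
    (C' : Submodule (ZMod q) (Fin m → ZMod q))
    (hk : Module.finrank (ZMod q) C' = k)
    (hsec : ∀ c ∈ C', ∀ c' ∈ C', c ≠ c' → Disjoint (RBall c) (RBall c')) :
    (∃ S : Submodule (ZMod q) (Fin (2 * m) → ZMod q),
        (S : Set (Fin (2 * m) → ZMod q)) = {z | pairDiffZ q m z ∈ C'} ∧
        Module.finrank (ZMod q) S = m + k ∧
        ∀ x ∈ S, ∀ y ∈ S, x ≠ y → 2 ≤ DasymZ x y) ∧
    (∃ T : Submodule (ZMod q) (Fin (2 * m - 1) → ZMod q),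
        (T : Set (Fin (2 * m - 1) → ZMod q)) = {z | oddOuterZ q m z ∈ C'} ∧
        Module.finrank (ZMod q) T = m + k - 1 ∧
        ∀ x ∈ T, ∀ y ∈ T, x ≠ y → 2 ≤ DasymZ x y) := by
  have : Fact q.Prime := ⟨hp⟩
  have : Fact (2 < q) := ⟨hq⟩
  have hkm : k ≤ m := hk ▸ (Submodule.finrank_le C').trans_eq (Module.finrank_fin_fun _)
  have hpair := finrank_comap_add_finrank_of_surjective pairDiffL_surjective C'
  have hodd := finrank_comap_add_finrank_of_surjective oddOuterL_surjective C'
  simp only [Module.finrank_fin_fun, hk] at hpair hodd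
  refine ⟨⟨C'.comap (pairDiffL q m), rfl, by omega, fun x hx y hy => ?_⟩,
    ⟨C'.comap (oddOuterL q m), rfl, by omega, fun x hx y hy => ?_⟩⟩
  · exact two_le_dasymZ_of_apply_single _ pairDiffL_single (fun _ => ite_one_neg_one_eq_or _) C'
      hsec pairDiffL_sign_injective hx hy
  · exact two_le_dasymZ_of_apply_single _ oddOuterL_single (fun _ => ite_one_neg_one_eq_or _) C'
      hsec oddOuterL_sign_injective hx hy
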